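/- arXiv:1510.08732 — 4 statements merged into one kernel-verified Lean document; each statement's English description precedes it below -/
import Mathlib

section
/- Let r ≥ 1 and let l₁ < ⋯ < l_p = r and τ₁ < ⋯ < τ_p = r be indices in {1,…,r}. Let Θ_r(l;τ) be the set of permutations μ of {1,…,r} satisfying: (Rule 1) μ(l_i) < μ(l_{i+1}) for all i; (Rule 2) μ(y) < μ(y') whenever y < y' and μ(y), μ(y') lie in the same block I_i of the partition I₁ = {1,…,μ(l₁)}, I_i = {μ(l_{i-1})+1,…,μ(l_i)}; and μ(l_i) = τ_i for all i. Let Ξ_r(l;τ) be the set of permutations ρ of {1,…,r} satisfying: (Rule 4) ρ(τ_i) < ρ(τ_j) for i < j; (Rule 5) ρ(y) < ρ(y') whenever y < y' and y, y' lie in the same block J_i = {τ_{i-1}+1,…,τ_i} (with τ₀ = 0); and ρ(τ_i) = l_i for all i. Then Ξ_r(l;τ) = {ρ : ρ⁻¹ ∈ Θ_r(l;τ)}. -/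
/-- The set `Θ_r(l;τ)` of permutations `μ` of `{1,…,r}` satisfying Rule 1, Rule 2
(with blocks `I_i` determined by the values `μ(l_i)`), and `μ(l_i) = τ_i`.
Two elements lie in the same block `I_i` iff they compare the same way
(`≤`) with every `μ(l_i)`. -/
def ThetaSet (r p : ℕ) (l τ : Fin p → Fin r) : Set (Equiv.Perm (Fin r)) :=
  {μ | (StrictMono fun i => μ (l i)) ∧
    (∀ y y' : Fin r, y < y' → (∀ i, μ y ≤ μ (l i) ↔ μ y' ≤ μ (l i)) → μ y < μ y') ∧
    (∀ i, μ (l i) = τ i)}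

/-- The set `Ξ_r(l;τ)` of permutations `ρ` of `{1,…,r}` satisfying Rule 4, Rule 5
(with blocks `J_i = {τ_{i-1}+1,…,τ_i}`), and `ρ(τ_i) = l_i`. -/
def XiSet (r p : ℕ) (l τ : Fin p → Fin r) : Set (Equiv.Perm (Fin r)) :=
  {ρ | (StrictMono fun i => ρ (τ i)) ∧
    (∀ y y' : Fin r, y < y' → (∀ i, y ≤ τ i ↔ y' ≤ τ i) → ρ y < ρ y') ∧
    (∀ i, ρ (τ i) = l i)}

/-!
Since `ρ(τ_i) = l_i` is the same condition as `ρ⁻¹(l_i) = τ_i`, Rules 1 and 4 reduce to the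
monotonicity of `τ` and of `l`, and the blocks `I_i` of `ρ⁻¹` are the images under `ρ` of the
blocks `J_i`. Substituting `y = ρ x`, Rule 2 for `ρ⁻¹` becomes the contrapositive of Rule 5 for `ρ`:
for a symmetric relation `S`, an injective map of linear orders preserves `<` on `S`-related
pairs iff it reflects `<` on them.
-/

section

variable {α β : Type*} [LinearOrder α] [LinearOrder β]

theorem forall_lt_imp_lt_iff_of_injective {f : α → β} (hf : Function.Injective f)
    {S : α → α → Prop} [Std.Symm S] :
    (∀ x y, f x < f y → S x y → x < y) ↔ ∀ x y, x < y → S x y → f x < f y := by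
  constructor
  · intro h x y hxy hS
    rcases lt_trichotomy (f x) (f y) with hlt | heq | hgt
    · exact hlt
    · exact absurd (hf heq) hxy.ne
    · exact absurd (h y x hgt (symm hS)) hxy.not_gt
  · intro h x y hfxy hS
    rcases lt_trichotomy x y with hlt | rfl | hgt
    · exact hlt
    · exact absurd hfxy (lt_irrefl _)
    · exact absurd (h y x hgt (symm hS)) hfxy.not_gt

theorem Equiv.Perm.forall_lt_imp_inv_lt_iff (ρ : Equiv.Perm α)
    {S : α → α → Prop} [Std.Symm S] :
    (∀ y y', y < y' → S (ρ⁻¹ y) (ρ⁻¹ y') → ρ⁻¹ y < ρ⁻¹ y') ↔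
      ∀ x x', x < x' → S x x' → ρ x < ρ x' := by
  rw [← forall_lt_imp_lt_iff_of_injective (S := S) ρ.injective]
  refine ρ.forall_congr_right.symm.trans <| forall_congr' fun x =>
    ρ.forall_congr_right.symm.trans <| forall_congr' fun x' => ?_
  simp only [Equiv.Perm.coe_inv, Equiv.symm_apply_apply]

end

theorem Equiv.Perm.forall_inv_apply_eq_iff {α ι : Type*} (ρ : Equiv.Perm α) (l τ : ι → α) :
    (∀ i, ρ⁻¹ (l i) = τ i) ↔ ∀ i, ρ (τ i) = l i :=
  forall_congr' fun _ => Equiv.Perm.inv_eq_iff_eq.trans eq_comm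

section

variable {r p : ℕ} {l τ : Fin p → Fin r}

theorem mem_xiSet_iff (hl : StrictMono l) (ρ : Equiv.Perm (Fin r)) :
    ρ ∈ XiSet r p l τ ↔
      (∀ y y' : Fin r, y < y' → (∀ i, y ≤ τ i ↔ y' ≤ τ i) → ρ y < ρ y') ∧
        ∀ i, ρ (τ i) = l i := by
  refine ⟨fun h => h.2, fun ⟨hblock, hfix⟩ => ⟨?_, hblock, hfix⟩⟩
  simpa only [hfix] using hl

theorem inv_mem_thetaSet_iff (hτ : StrictMono τ) (ρ : Equiv.Perm (Fin r)) :
    ρ⁻¹ ∈ ThetaSet r p l τ ↔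
      (∀ y y' : Fin r, y < y' → (∀ i, y ≤ τ i ↔ y' ≤ τ i) → ρ y < ρ y') ∧
        ∀ i, ρ (τ i) = l i := by
  have : Std.Symm fun x x' : Fin r => ∀ i, x ≤ τ i ↔ x' ≤ τ i :=
    ⟨fun _ _ h i => (h i).symm⟩
  rw [ThetaSet, Set.mem_ofPred_eq, ← ρ.forall_lt_imp_inv_lt_iff, ← ρ.forall_inv_apply_eq_iff]
  constructor
  · rintro ⟨-, hblock, hfix⟩
    exact ⟨by simpa only [hfix] using hblock, hfix⟩
  · rintro ⟨hblock, hfix⟩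
    exact ⟨by simpa only [hfix] using hτ, by simpa only [hfix] using hblock, hfix⟩

end

theorem xiSet_eq_inv_thetaSet_general (r p : ℕ)
    (l τ : Fin p → Fin r) (hl : StrictMono l) (hτ : StrictMono τ) :
    XiSet r p l τ = {ρ : Equiv.Perm (Fin r) | ρ⁻¹ ∈ ThetaSet r p l τ} := by
  ext ρ
  rw [Set.mem_ofPred_eq, mem_xiSet_iff hl, inv_mem_thetaSet_iff hτ]

/-- Proposition 2.1: if at least one of `Ξ_r(l;τ)`, `Θ_r(l;τ)` is nonempty, then
`Ξ_r(l;τ) = {ρ : ρ⁻¹ ∈ Θ_r(l;τ)}`. -/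
theorem xiSet_eq_inv_thetaSet (r p : ℕ) (hr : 0 < r) (hp : 0 < p)
    (l τ : Fin p → Fin r) (hl : StrictMono l) (hτ : StrictMono τ)
    (hltop : (l ⟨p - 1, Nat.sub_lt hp one_pos⟩ : ℕ) + 1 = r)
    (hτtop : (τ ⟨p - 1, Nat.sub_lt hp one_pos⟩ : ℕ) + 1 = r)
    (hne : (XiSet r p l τ).Nonempty ∨ (ThetaSet r p l τ).Nonempty) :
    XiSet r p l τ = {ρ : Equiv.Perm (Fin r) | ρ⁻¹ ∈ ThetaSet r p l τ} :=
  xiSet_eq_inv_thetaSet_general r p l τ hl hτ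
end

section
/- Let μ be a permutation of {1,…,r} such that μ(l_i) < μ(l_{i+1}) for all i (Rule 1), and such that μ(y) < μ(y') whenever y < y' and μ(y), μ(y') lie in the same block of the partition I₁ = {1,…,μ(l₁)}, I_i = {μ(l_{i-1})+1,…,μ(l_i)} for i = 2,…,p (Rule 2). Then μ also satisfies Rule 3: μ(l_{i-1}) < μ(y) whenever l_{i-1} < y < l_i. -/
/-!
If `μ y ≤ μ(l_i)` for some `y > l_i`, let `k` be the first index with `μ y ≤ μ(l_k)`. By Rule 1
the values `μ(l_m)` above `μ y` are exactly those with `m ≥ k`, so `μ y` and `μ(l_k)` lie in the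
same block, while `l_k ≤ l_i < y`. Rule 2 then forces `μ(l_k) < μ y`, a contradiction.
-/

/-- `a` and `b` lie in the same block of the partition cut out by the values of `c`. -/
def SameBlock {ι β : Type*} [LE β] (c : ι → β) (a b : β) : Prop :=
  ∀ i, a ≤ c i ↔ b ≤ c i

theorem exists_le_sameBlock_of_le {ι β : Type*} [LinearOrder ι] [WellFoundedLT ι] [Preorder β]
    {c : ι → β} (hc : Monotone c) {b : β} {i : ι} (h : b ≤ c i) :
    ∃ k ≤ i, SameBlock c (c k) b := by
  obtain ⟨k, hk, hmin⟩ := wellFounded_lt.has_min {m | b ≤ c m} ⟨i, h⟩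
  have hk_le : ∀ m, b ≤ c m → k ≤ m := fun m hm => not_lt.mp (hmin m hm)
  exact ⟨k, hk_le i h, fun m => ⟨hk.trans, fun hm => hc (hk_le m hm)⟩⟩

theorem lt_apply_of_lt_of_sameBlock {ι α β : Type*} [LinearOrder ι] [WellFoundedLT ι]
    [Preorder α] [LinearOrder β] {l : ι → α} {μ : α → β} (hl : Monotone l)
    (rule1 : Monotone (μ ∘ l))
    (rule2 : ∀ y y', y < y' → SameBlock (μ ∘ l) (μ y) (μ y') → μ y < μ y')
    {i : ι} {y : α} (hy : l i < y) : μ (l i) < μ y := by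
  by_contra! h
  obtain ⟨k, hki, hblock⟩ := exists_le_sameBlock_of_le rule1 h
  have hky : μ (l k) < μ y := rule2 _ _ ((hl hki).trans_lt hy) hblock
  exact hky.not_ge ((hblock k).mp le_rfl)

theorem rule1_rule2_implies_rule3_general (r p : ℕ)
    (l : Fin p → Fin r) (hl : StrictMono l)
    (μ : Equiv.Perm (Fin r))
    (rule1 : StrictMono fun i => μ (l i))
    (rule2 : ∀ y y' : Fin r, y < y' →
      (∀ i, μ y ≤ μ (l i) ↔ μ y' ≤ μ (l i)) → μ y < μ y') :
    ∀ i j : Fin p, (i : ℕ) + 1 = (j : ℕ) →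
      ∀ y : Fin r, l i < y → y < l j → μ (l i) < μ y :=
  fun _ _ _ _ hy _ => lt_apply_of_lt_of_sameBlock hl.monotone rule1.monotone rule2 hy

/-- Lemma 4.1: a permutation `μ` of `{1,…,r}` satisfying Rule 1 and Rule 2
(with blocks `I_i` determined by the values `μ(l_i)`; two elements lie in the
same block iff they compare the same way with every `μ(l_i)`) also satisfies
Rule 3: `μ(l_{i-1}) < μ(y)` whenever `l_{i-1} < y < l_i`. -/
theorem rule1_rule2_implies_rule3 (r p : ℕ) (hr : 0 < r) (hp : 0 < p)
    (l : Fin p → Fin r) (hl : StrictMono l)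
    (hltop : (l ⟨p - 1, Nat.sub_lt hp one_pos⟩ : ℕ) + 1 = r)
    (μ : Equiv.Perm (Fin r))
    (rule1 : StrictMono fun i => μ (l i))
    (rule2 : ∀ y y' : Fin r, y < y' →
      (∀ i, μ y ≤ μ (l i) ↔ μ y' ≤ μ (l i)) → μ y < μ y') :
    ∀ i j : Fin p, (i : ℕ) + 1 = (j : ℕ) →
      ∀ y : Fin r, l i < y → y < l j → μ (l i) < μ y :=
  rule1_rule2_implies_rule3_general r p l hl μ rule1 rule2
end

section
/- Let β, β' ∈ (0,1) with β + β' > 1, let f ∈ C^{β'}([s,t]) and h ∈ C^β([s,t]). Then the Young integral satisfies |∫_s^t f dh| ≤ K [‖f‖_{s,t,∞} + ‖f‖_{s,t,β'} (t−s)^{β'}] ‖h‖_{β} (t−s)^{β}, where ‖·‖_{s,t,∞} is the sup norm on [s,t], ‖·‖_{s,t,β'} is the β'-Hölder seminorm on [s,t], and K depends only on β, β'. -/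
/-!
In a partition of `[a, b]` with `N + 1` points some double step `[p i, p (i + 2)]` has length at
most `2 (b - a) / (N - 1)`. Deleting its middle point changes the Riemann–Stieltjes sum by
`(f (p (i + 1)) - f (p i)) (h (p (i + 2)) - h (p (i + 1)))`, which is at most
`Cf Ch (2 (b - a) / (N - 1)) ^ (β + β')`. Deleting points down to the trivial partition gives
Young's maximal inequality `|S - f a (h b - h a)| ≤ Cf Ch (2 (b - a)) ^ (β + β') ζ(β + β')`,
uniformly in the partition. Applied on each block, it shows that refining the uniform partition
with `n` pieces moves the sum by `O(n ^ (1 - β - β'))`; hence the sums converge to `RS f h a b`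
and the inequality passes to the limit.
-/

/-- The Riemann–Stieltjes integral `∫_a^b f dg`, defined as the limit of
left-endpoint Riemann–Stieltjes sums along uniform partitions. -/
noncomputable def RS (f g : ℝ → ℝ) (a b : ℝ) : ℝ :=
  Filter.limUnder Filter.atTop fun n : ℕ =>
    ∑ k ∈ Finset.range n,
      f (a + k * (b - a) / n) * (g (a + (k + 1) * (b - a) / n) - g (a + k * (b - a) / n))

/-- The iterated Riemann–Stieltjes integral
`∫_a^b ∫_a^{s_r} ⋯ ∫_a^{s_2} dG_0(s_1) ⋯ dG_{r-1}(s_r)`,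
where `G i` is the `i`-th integrator (index `0` innermost, `Fin.last` outermost). -/
noncomputable def iterRS : (r : ℕ) → (Fin r → ℝ → ℝ) → ℝ → ℝ → ℝ
  | 0, _, _, _ => 1
  | (r + 1), G, a, b =>
      RS (fun u => iterRS r (fun i => G i.castSucc) a u) (G (Fin.last r)) a b

open Filter Finset Topology

def IsHolderOn (C α : ℝ) (f : ℝ → ℝ) (S : Set ℝ) : Prop :=
  ∀ u ∈ S, ∀ v ∈ S, |f v - f u| ≤ C * |v - u| ^ α

namespace IsHolderOn

variable {C α : ℝ} {f : ℝ → ℝ} {S : Set ℝ}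

lemma mono {T : Set ℝ} (hf : IsHolderOn C α f S) (hTS : T ⊆ S) : IsHolderOn C α f T :=
  fun u hu v hv => hf u (hTS hu) v (hTS hv)

lemma nonneg {u v : ℝ} (hf : IsHolderOn C α f S) (hu : u ∈ S) (hv : v ∈ S) (huv : u ≠ v) :
    0 ≤ C :=
  nonneg_of_mul_nonneg_left ((abs_nonneg _).trans (hf u hu v hv))
    (Real.rpow_pos_of_pos (abs_pos.mpr (sub_ne_zero.mpr huv.symm)) α)

lemma abs_sub_le_of_le {a b u v : ℝ} (hf : IsHolderOn C α f S) (hC : 0 ≤ C) (hα : 0 ≤ α)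
    (hu : u ∈ S) (hv : v ∈ S) (hau : a ≤ u) (huv : u ≤ v) (hvb : v ≤ b) :
    |f v - f u| ≤ C * (b - a) ^ α := by
  refine (hf u hu v hv).trans (mul_le_mul_of_nonneg_left ?_ hC)
  rw [abs_of_nonneg (sub_nonneg.mpr huv)]
  exact Real.rpow_le_rpow (sub_nonneg.mpr huv) (by linarith) hα

lemma abs_mul_sub_le {Cf Ch β β' : ℝ} {h : ℝ → ℝ} {u v w : ℝ}
    (hf : IsHolderOn Cf β' f S) (hh : IsHolderOn Ch β h S) (hCf : 0 ≤ Cf) (hCh : 0 ≤ Ch)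
    (hβ : 0 < β) (hβ' : 0 < β') (hu : u ∈ S) (hv : v ∈ S) (hw : w ∈ S)
    (huv : u ≤ v) (hvw : v ≤ w) :
    |(f v - f u) * (h w - h v)| ≤ Cf * Ch * (w - u) ^ (β + β') := by
  have hfuv := hf.abs_sub_le_of_le hCf hβ'.le hu hv le_rfl huv hvw
  have hhvw := hh.abs_sub_le_of_le hCh hβ.le hv hw huv hvw le_rfl
  calc |(f v - f u) * (h w - h v)| ≤ Cf * (w - u) ^ β' * (Ch * (w - u) ^ β) := by
        rw [abs_mul]; exact mul_le_mul hfuv hhvw (abs_nonneg _) ((abs_nonneg _).trans hfuv)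
    _ = Cf * Ch * (w - u) ^ (β + β') := by
        rw [Real.rpow_add' (by linarith) (by positivity)]; ring

end IsHolderOn

def stieltjesSum (f h : ℝ → ℝ) (p : ℕ → ℝ) (N : ℕ) : ℝ :=
  ∑ k ∈ range N, f (p k) * (h (p (k + 1)) - h (p k))

def deleteAt (p : ℕ → ℝ) (j : ℕ) : ℕ → ℝ :=
  fun k => if k < j then p k else p (k + 1)

section StieltjesSum

variable (f h : ℝ → ℝ) (p : ℕ → ℝ)

lemma stieltjesSum_congr {q : ℕ → ℝ} {N : ℕ} (hpq : ∀ k ≤ N, p k = q k) :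
    stieltjesSum f h p N = stieltjesSum f h q N :=
  sum_congr rfl fun k hk => by
    rw [hpq k (mem_range.mp hk).le, hpq (k + 1) (mem_range.mp hk)]

lemma stieltjesSum_succ (N : ℕ) :
    stieltjesSum f h p (N + 1) = stieltjesSum f h p N + f (p N) * (h (p (N + 1)) - h (p N)) :=
  sum_range_succ _ _

lemma stieltjesSum_add (m n : ℕ) :
    stieltjesSum f h p (m + n)
      = stieltjesSum f h p m + stieltjesSum f h (fun i => p (m + i)) n :=
  sum_range_add _ _ _

lemma stieltjesSum_mul (n q : ℕ) :
    stieltjesSum f h p (n * q)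
      = ∑ k ∈ range n, stieltjesSum f h (fun i => p (k * q + i)) q := by
  induction n with
  | zero => simp [stieltjesSum]
  | succ n ih => rw [Nat.succ_mul, stieltjesSum_add, ih, sum_range_succ]

lemma stieltjesSum_deleteAt {i N : ℕ} (hiN : i < N) :
    stieltjesSum f h p (N + 1) = stieltjesSum f h (deleteAt p (i + 1)) N
      + (f (p (i + 1)) - f (p i)) * (h (p (i + 2)) - h (p (i + 1))) := by
  induction N, hiN using Nat.le_induction with
  | base =>
    have hlow : stieltjesSum f h (deleteAt p (i + 1)) i = stieltjesSum f h p i :=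
      stieltjesSum_congr _ _ _ fun k hk => by simp [deleteAt, Nat.lt_succ_of_le hk]
    simp only [stieltjesSum_succ _ _ (deleteAt p (i + 1)), stieltjesSum_succ _ _ p, hlow,
      deleteAt, lt_add_one, if_true, lt_irrefl, if_false]
    ring
  | succ N hiN ih =>
    simp only [stieltjesSum_succ _ _ (deleteAt p (i + 1)), stieltjesSum_succ _ _ p (N + 1), ih,
      deleteAt, show ¬N < i + 1 by omega, show ¬N + 1 < i + 1 by omega, if_false]
    ring

end StieltjesSum

lemma Monotone.deleteAt {p : ℕ → ℝ} (hp : Monotone p) (j : ℕ) :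
    Monotone (deleteAt p j) := by
  intro k l hkl
  unfold _root_.deleteAt
  split_ifs <;> apply hp <;> omega

/-- The double steps `[p i, p (i + 2)]` together cover `[p 0, p (M + 2)]` at most twice. -/
lemma Monotone.exists_short_double_step {p : ℕ → ℝ} (hp : Monotone p) (M : ℕ) :
    ∃ i ≤ M, p (i + 2) - p i ≤ 2 * (p (M + 2) - p 0) / (M + 1) := by
  have htel : ∑ i ∈ range (M + 1), (p (i + 2) - p i)
      = (p (M + 2) - p 1) + (p (M + 1) - p 0) := by
    rw [← sum_range_sub (fun i => p (i + 1)), ← sum_range_sub p, ← sum_add_distrib]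
    exact sum_congr rfl fun i _ => by ring
  have hsum : ∑ i ∈ range (M + 1), (p (i + 2) - p i)
      ≤ ∑ _i ∈ range (M + 1), 2 * (p (M + 2) - p 0) / (M + 1) := by
    rw [htel, sum_const, card_range, nsmul_eq_mul, Nat.cast_succ,
      mul_div_cancel₀ _ (by positivity)]
    linarith [hp (Nat.zero_le 1), hp (Nat.le_succ (M + 1))]
  obtain ⟨i, hi, hle⟩ := exists_le_of_sum_le nonempty_range_add_one hsum
  exact ⟨i, Nat.lt_succ_iff.mp (mem_range.mp hi), hle⟩

noncomputable def zetaSum (θ : ℝ) : ℝ := ∑' m : ℕ, ((m : ℝ) + 1) ^ (-θ)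

lemma summable_add_one_rpow_neg {θ : ℝ} (hθ : 1 < θ) :
    Summable fun m : ℕ => ((m : ℝ) + 1) ^ (-θ) := by
  have := (summable_nat_add_iff 1).mpr (Real.summable_nat_rpow_inv.mpr hθ)
  push_cast at this
  exact this.congr fun m => (Real.rpow_neg (by positivity) θ).symm

lemma zetaSum_nonneg (θ : ℝ) : 0 ≤ zetaSum θ :=
  tsum_nonneg fun _ => by positivity

section LoveYoung

variable {f h : ℝ → ℝ} {p : ℕ → ℝ} {Cf Ch β β' : ℝ}

lemma mem_Icc_of_monotone (hp : Monotone p) {k N : ℕ} (hk : k ≤ N) :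
    p k ∈ Set.Icc (p 0) (p N) :=
  ⟨hp k.zero_le, hp hk⟩

lemma abs_sub_mul_sub_le_of_short {M i : ℕ} (hp : Monotone p)
    (hf : IsHolderOn Cf β' f (Set.Icc (p 0) (p (M + 2))))
    (hh : IsHolderOn Ch β h (Set.Icc (p 0) (p (M + 2))))
    (hCf : 0 ≤ Cf) (hCh : 0 ≤ Ch) (hβ : 0 < β) (hβ' : 0 < β') (hiM : i ≤ M)
    (hi : p (i + 2) - p i ≤ 2 * (p (M + 2) - p 0) / (M + 1)) :
    |(f (p (i + 1)) - f (p i)) * (h (p (i + 2)) - h (p (i + 1)))|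
      ≤ Cf * Ch * (2 * (p (M + 2) - p 0)) ^ (β + β') * ((M : ℝ) + 1) ^ (-(β + β')) := by
  have hM : (0 : ℝ) < M + 1 := by positivity
  have hab : 0 ≤ p (M + 2) - p 0 := sub_nonneg.mpr (hp (Nat.zero_le _))
  calc _ ≤ Cf * Ch * (p (i + 2) - p i) ^ (β + β') :=
        hf.abs_mul_sub_le hh hCf hCh hβ hβ' (mem_Icc_of_monotone hp (by omega))
          (mem_Icc_of_monotone hp (by omega)) (mem_Icc_of_monotone hp (by omega))
          (hp (Nat.le_succ i)) (hp (Nat.le_succ (i + 1)))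
    _ ≤ Cf * Ch * (2 * (p (M + 2) - p 0) / (M + 1)) ^ (β + β') := by
        gcongr
        exact sub_nonneg.mpr (hp (by omega))
    _ = _ := by
        rw [Real.div_rpow (by linarith) hM.le, Real.rpow_neg hM.le]; ring

/-- Young's maximal inequality: delete, one at a time, the middle point of a shortest double
step. -/
theorem abs_stieltjesSum_sub_le_sum (hp : Monotone p) (hCf : 0 ≤ Cf) (hCh : 0 ≤ Ch)
    (hβ : 0 < β) (hβ' : 0 < β') (N : ℕ)
    (hf : IsHolderOn Cf β' f (Set.Icc (p 0) (p N)))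
    (hh : IsHolderOn Ch β h (Set.Icc (p 0) (p N))) :
    |stieltjesSum f h p N - f (p 0) * (h (p N) - h (p 0))|
      ≤ Cf * Ch * (2 * (p N - p 0)) ^ (β + β')
        * ∑ m ∈ range (N - 1), ((m : ℝ) + 1) ^ (-(β + β')) := by
  induction N generalizing p with
  | zero => simp [stieltjesSum]
  | succ N ih =>
    rcases N with _ | M
    · simp [stieltjesSum]
    obtain ⟨i, hiM, hi⟩ := hp.exists_short_double_step M
    have hq0 : deleteAt p (i + 1) 0 = p 0 := by simp [deleteAt]
    have hqN : deleteAt p (i + 1) (M + 1) = p (M + 2) := by simp [deleteAt, hiM]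
    have IH := ih (hp.deleteAt (i + 1)) (by rwa [hq0, hqN]) (by rwa [hq0, hqN])
    rw [hq0, hqN] at IH
    have hcost := abs_sub_mul_sub_le_of_short hp hf hh hCf hCh hβ hβ' hiM hi
    rw [stieltjesSum_deleteAt f h p (Nat.lt_succ_of_le hiM)]
    calc _ ≤ |stieltjesSum f h (deleteAt p (i + 1)) (M + 1)
            - f (p 0) * (h (p (M + 2)) - h (p 0))|
          + |(f (p (i + 1)) - f (p i)) * (h (p (i + 2)) - h (p (i + 1)))| := by
          rw [add_sub_right_comm]; exact abs_add_le _ _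
      _ ≤ _ := by
          rw [show M + 1 + 1 - 1 = M + 1 by omega, sum_range_succ, mul_add]
          simpa using add_le_add IH hcost

theorem abs_stieltjesSum_sub_le (hp : Monotone p) (hCf : 0 ≤ Cf) (hCh : 0 ≤ Ch) (hβ : 0 < β)
    (hβ' : 0 < β') (hββ' : 1 < β + β') (N : ℕ)
    (hf : IsHolderOn Cf β' f (Set.Icc (p 0) (p N)))
    (hh : IsHolderOn Ch β h (Set.Icc (p 0) (p N))) :
    |stieltjesSum f h p N - f (p 0) * (h (p N) - h (p 0))|
      ≤ Cf * Ch * (2 * (p N - p 0)) ^ (β + β') * zetaSum (β + β') := by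
  refine (abs_stieltjesSum_sub_le_sum hp hCf hCh hβ hβ' N hf hh).trans
    (mul_le_mul_of_nonneg_left ?_ ?_)
  · exact (summable_add_one_rpow_neg hββ').sum_le_tsum _ fun _ _ => by positivity
  · have := hp N.zero_le
    exact mul_nonneg (mul_nonneg hCf hCh) (Real.rpow_nonneg (by linarith) _)

end LoveYoung

noncomputable def unifPartition (a b : ℝ) (n k : ℕ) : ℝ := a + k * (b - a) / n

section UnifPartition

variable {a b : ℝ} {n : ℕ}

@[simp]
lemma unifPartition_zero : unifPartition a b n 0 = a := by simp [unifPartition]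

lemma unifPartition_self (hn : n ≠ 0) : unifPartition a b n n = b := by
  simp [unifPartition, hn]

lemma unifPartition_mul_mul {q : ℕ} (k : ℕ) (hq : q ≠ 0) :
    unifPartition a b (n * q) (k * q) = unifPartition a b n k := by
  simp only [unifPartition, Nat.cast_mul]
  rw [mul_right_comm, mul_div_mul_right _ _ (Nat.cast_ne_zero.mpr hq)]

lemma unifPartition_succ_sub (k : ℕ) :
    unifPartition a b n (k + 1) - unifPartition a b n k = (b - a) / n := by
  simp only [unifPartition, Nat.cast_succ]; ring

lemma monotone_unifPartition (hab : a ≤ b) (n : ℕ) : Monotone (unifPartition a b n) :=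
  fun k l hkl => by
    unfold unifPartition
    gcongr

lemma unifPartition_mem_Icc (hab : a ≤ b) (hn : n ≠ 0) {k : ℕ} (hk : k ≤ n) :
    unifPartition a b n k ∈ Set.Icc a b := by
  simpa [unifPartition_self hn] using mem_Icc_of_monotone (monotone_unifPartition hab n) hk

end UnifPartition

lemma RS_eq_limUnder (f h : ℝ → ℝ) (a b : ℝ) :
    RS f h a b = limUnder atTop fun n => stieltjesSum f h (unifPartition a b n) n := by
  simp only [RS, stieltjesSum, unifPartition, Nat.cast_add, Nat.cast_one]

lemma RS_self (f h : ℝ → ℝ) (a : ℝ) : RS f h a a = 0 := by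
  simp [RS_eq_limUnder, stieltjesSum, unifPartition, tendsto_const_nhds.limUnder_eq]

/-- `u n` and `u m` are compared through `u (n * m)`. -/
lemma exists_tendsto_of_abs_mul_sub_le {u : ℕ → ℝ} {c ε : ℝ} (hε : 0 < ε)
    (h : ∀ n q : ℕ, n ≠ 0 → q ≠ 0 → |u (n * q) - u n| ≤ c * (n : ℝ) ^ (-ε)) :
    ∃ L, Tendsto u atTop (𝓝 L) := by
  have hc : 0 ≤ c := by simpa using (abs_nonneg _).trans (h 1 1 one_ne_zero one_ne_zero)
  have hdist : ∀ n m : ℕ, n ≤ m →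
      dist (u (n + 1)) (u (m + 1)) ≤ 2 * c * ((n + 1 : ℕ) : ℝ) ^ (-ε) := by
    intro n m hnm
    have hnm' := h (n + 1) (m + 1) n.succ_ne_zero m.succ_ne_zero
    have hmn' := h (m + 1) (n + 1) m.succ_ne_zero n.succ_ne_zero
    rw [mul_comm] at hmn'
    have hmono : ((m + 1 : ℕ) : ℝ) ^ (-ε) ≤ ((n + 1 : ℕ) : ℝ) ^ (-ε) :=
      Real.rpow_le_rpow_of_nonpos (by positivity) (by exact_mod_cast Nat.succ_le_succ hnm)
        (by linarith)
    rw [Real.dist_eq]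
    calc _ ≤ |u ((n + 1) * (m + 1)) - u (n + 1)| + |u ((n + 1) * (m + 1)) - u (m + 1)| := by
          rw [abs_sub_comm _ (u (n + 1))]; exact abs_sub_le _ _ _
      _ ≤ _ := by nlinarith
  have hbound : Tendsto (fun n : ℕ => 2 * c * ((n + 1 : ℕ) : ℝ) ^ (-ε)) atTop (𝓝 0) := by
    simpa using ((tendsto_rpow_neg_atTop hε).comp
      (tendsto_natCast_atTop_atTop.comp (tendsto_add_atTop_nat 1))).const_mul (2 * c)
  obtain ⟨L, hL⟩ := cauchySeq_tendsto_of_complete (cauchySeq_of_le_tendsto_0' _ hdist hbound)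
  exact ⟨L, (tendsto_add_atTop_iff_nat 1).mp hL⟩

section YoungIntegral

variable {f h : ℝ → ℝ} {a b Cf Ch β β' : ℝ}

/-- Young's maximal inequality on each of the `n` blocks, of length `(b - a) / n`. -/
theorem abs_stieltjesSum_unifPartition_mul_sub_le (hab : a ≤ b)
    (hf : IsHolderOn Cf β' f (Set.Icc a b)) (hh : IsHolderOn Ch β h (Set.Icc a b))
    (hCf : 0 ≤ Cf) (hCh : 0 ≤ Ch) (hβ : 0 < β) (hβ' : 0 < β') (hββ' : 1 < β + β')
    {n q : ℕ} (hn : n ≠ 0) (hq : q ≠ 0) :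
    |stieltjesSum f h (unifPartition a b (n * q)) (n * q)
        - stieltjesSum f h (unifPartition a b n) n|
      ≤ Cf * Ch * (2 * (b - a)) ^ (β + β') * zetaSum (β + β')
        * (n : ℝ) ^ (-(β + β' - 1)) := by
  set x := unifPartition a b n
  set P := unifPartition a b (n * q)
  have hblock : ∀ k ∈ range n,
      |stieltjesSum f h (fun i => P (k * q + i)) q - f (x k) * (h (x (k + 1)) - h (x k))|
        ≤ Cf * Ch * (2 * ((b - a) / n)) ^ (β + β') * zetaSum (β + β') := by
    intro k hk
    have hstart : P (k * q + 0) = x k := unifPartition_mul_mul k hq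
    have hend : P (k * q + q) = x (k + 1) := by
      rw [← Nat.succ_mul]; exact unifPartition_mul_mul _ hq
    have hsub : Set.Icc (x k) (x (k + 1)) ⊆ Set.Icc a b :=
      Set.Icc_subset_Icc (unifPartition_mem_Icc hab hn (mem_range.mp hk).le).1
        (unifPartition_mem_Icc hab hn (mem_range.mp hk)).2
    have := abs_stieltjesSum_sub_le (p := fun i => P (k * q + i))
      ((monotone_unifPartition hab _).comp fun _ _ hij => Nat.add_le_add_left hij _)
      hCf hCh hβ hβ' hββ' q (by rw [hstart, hend]; exact hf.mono hsub)
      (by rw [hstart, hend]; exact hh.mono hsub)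
    rwa [hstart, hend, unifPartition_succ_sub] at this
  have hn' : (0 : ℝ) < n := by positivity
  calc _ = |∑ k ∈ range n,
        (stieltjesSum f h (fun i => P (k * q + i)) q - f (x k) * (h (x (k + 1)) - h (x k)))| := by
        rw [stieltjesSum_mul, sum_sub_distrib]; rfl
    _ ≤ n * (Cf * Ch * (2 * ((b - a) / n)) ^ (β + β') * zetaSum (β + β')) := by
        simpa using (abs_sum_le_sum_abs _ _).trans (sum_le_sum hblock)
    _ = _ := by
        rw [mul_div_assoc', Real.div_rpow (by linarith) hn'.le, Real.rpow_neg hn'.le,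
          Real.rpow_sub hn', Real.rpow_one]
        field_simp

theorem tendsto_stieltjesSum_unifPartition_RS (hab : a ≤ b)
    (hf : IsHolderOn Cf β' f (Set.Icc a b)) (hh : IsHolderOn Ch β h (Set.Icc a b))
    (hCf : 0 ≤ Cf) (hCh : 0 ≤ Ch) (hβ : 0 < β) (hβ' : 0 < β') (hββ' : 1 < β + β') :
    Tendsto (fun n => stieltjesSum f h (unifPartition a b n) n) atTop (𝓝 (RS f h a b)) := by
  obtain ⟨L, hL⟩ := exists_tendsto_of_abs_mul_sub_le
    (u := fun n => stieltjesSum f h (unifPartition a b n) n) (by linarith : 0 < β + β' - 1)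
    fun _ _ hn hq =>
      abs_stieltjesSum_unifPartition_mul_sub_le hab hf hh hCf hCh hβ hβ' hββ' hn hq
  rwa [RS_eq_limUnder, hL.limUnder_eq]

theorem abs_RS_sub_le (hab : a ≤ b)
    (hf : IsHolderOn Cf β' f (Set.Icc a b)) (hh : IsHolderOn Ch β h (Set.Icc a b))
    (hCf : 0 ≤ Cf) (hCh : 0 ≤ Ch) (hβ : 0 < β) (hβ' : 0 < β') (hββ' : 1 < β + β') :
    |RS f h a b - f a * (h b - h a)|
      ≤ Cf * Ch * (2 * (b - a)) ^ (β + β') * zetaSum (β + β') := by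
  refine le_of_tendsto
    ((tendsto_stieltjesSum_unifPartition_RS hab hf hh hCf hCh hβ hβ' hββ').sub_const _).abs
    ((eventually_ne_atTop 0).mono fun n hn => ?_)
  have := abs_stieltjesSum_sub_le (monotone_unifPartition hab n) hCf hCh hβ hβ' hββ' n
    (by simpa [unifPartition_self hn] using hf) (by simpa [unifPartition_self hn] using hh)
  simpa [unifPartition_self hn] using this

end YoungIntegral

theorem young_integral_estimate_general (β β' : ℝ)
    (hβ0 : 0 < β) (hβ'0 : 0 < β') (hββ' : 1 < β + β') :
    ∃ K : ℝ, 0 < K ∧ ∀ (s t : ℝ) (f h : ℝ → ℝ) (Mf Cf Ch : ℝ), s ≤ t →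
      (∀ u ∈ Set.Icc s t, |f u| ≤ Mf) →
      (∀ u ∈ Set.Icc s t, ∀ v ∈ Set.Icc s t, |f v - f u| ≤ Cf * |v - u| ^ β') →
      (∀ u ∈ Set.Icc s t, ∀ v ∈ Set.Icc s t, |h v - h u| ≤ Ch * |v - u| ^ β) →
      |RS f h s t| ≤ K * (Mf + Cf * (t - s) ^ β') * Ch * (t - s) ^ β := by
  set Z := zetaSum (β + β')
  have hZ : 0 ≤ Z := zetaSum_nonneg _
  refine ⟨1 + 2 ^ (β + β') * Z, by positivity, fun s t f h Mf Cf Ch hst hMf hf hh => ?_⟩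
  rcases hst.eq_or_lt with rfl | hlt
  · simp [RS_self, Real.zero_rpow hβ0.ne']
  have hs : s ∈ Set.Icc s t := Set.left_mem_Icc.mpr hst
  have ht : t ∈ Set.Icc s t := Set.right_mem_Icc.mpr hst
  have hCf : 0 ≤ Cf := IsHolderOn.nonneg hf hs ht hlt.ne
  have hCh : 0 ≤ Ch := IsHolderOn.nonneg hh hs ht hlt.ne
  have hfs : |f s| ≤ Mf := hMf s hs
  have hΔh : |h t - h s| ≤ Ch * (t - s) ^ β := by
    simpa [abs_of_pos (sub_pos.mpr hlt)] using hh s hs t ht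
  have hpow : (2 * (t - s)) ^ (β + β') = 2 ^ (β + β') * (t - s) ^ β' * (t - s) ^ β := by
    rw [Real.mul_rpow zero_le_two (sub_nonneg.mpr hst), Real.rpow_add (sub_pos.mpr hlt)]; ring
  have hMf0 : 0 ≤ Mf := (abs_nonneg _).trans hfs
  have hslack : 0 ≤ (Cf * (t - s) ^ β' + 2 ^ (β + β') * Z * Mf) * Ch * (t - s) ^ β := by
    positivity
  calc |RS f h s t| ≤ |f s| * |h t - h s| + |RS f h s t - f s * (h t - h s)| := by
        rw [← abs_mul]
        simpa using abs_add_le (f s * (h t - h s)) (RS f h s t - f s * (h t - h s))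
    _ ≤ Mf * (Ch * (t - s) ^ β) + Cf * Ch * (2 * (t - s)) ^ (β + β') * Z :=
        add_le_add (mul_le_mul hfs hΔh (abs_nonneg _) hMf0)
          (abs_RS_sub_le hst hf hh hCf hCh hβ0 hβ'0 hββ')
    _ ≤ _ := by rw [hpow]; linarith

/-- The Young integral estimate: for `β + β' > 1` there is a constant `K` depending only on
`β, β'` such that `|∫_s^t f dh| ≤ K (‖f‖_{s,t,∞} + ‖f‖_{s,t,β'} (t−s)^{β'}) ‖h‖_β (t−s)^β`
for every `f ∈ C^{β'}([s,t])` and `h ∈ C^β([s,t])` (the norms being replaced by arbitrary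
upper bounds `Mf`, `Cf`, `Ch`). -/
theorem young_integral_estimate (β β' : ℝ)
    (hβ0 : 0 < β) (hβ1 : β < 1) (hβ'0 : 0 < β') (hβ'1 : β' < 1) (hββ' : 1 < β + β') :
    ∃ K : ℝ, 0 < K ∧ ∀ (s t : ℝ) (f h : ℝ → ℝ) (Mf Cf Ch : ℝ), s ≤ t →
      (∀ u ∈ Set.Icc s t, |f u| ≤ Mf) →
      (∀ u ∈ Set.Icc s t, ∀ v ∈ Set.Icc s t, |f v - f u| ≤ Cf * |v - u| ^ β') →
      (∀ u ∈ Set.Icc s t, ∀ v ∈ Set.Icc s t, |h v - h u| ≤ Ch * |v - u| ^ β) →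
      |RS f h s t| ≤ K * (Mf + Cf * (t - s) ^ β') * Ch * (t - s) ^ β :=
  young_integral_estimate_general β β' hβ0 hβ'0 hββ'
end

section
/- Let β, β' ∈ (0,1) with β + β' > 1, let x ∈ C^{β'}([0,T]), V ∈ C¹_b(ℝ^m), and y : [0,T] → ℝ^m a function with finite discrete Hölder seminorm ‖y‖_{β,n} over the uniform partition D = {kT/n}. Then for s, t ∈ D with s < t, |∫_s^t V(y_{η(r)}) dx_r| ≤ K [1 + ‖y‖_{s,t,β,n} (t−s)^β] ‖x‖_{β'} (t−s)^{β'}, where η(r) is the left endpoint of the partition interval containing r, and K depends on β, β', ‖V‖_∞, ‖∂V‖_∞. -/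
/-- `η(t)` is the left endpoint `t_k = kT/n` of the partition interval containing `t`. -/
noncomputable def etaFn (T : ℝ) (n : ℕ) (t : ℝ) : ℝ := (⌊t * n / T⌋₊ : ℝ) * T / n

/-!
Between grid points the integrand `V(y_{η(r)})` is constant, so each Riemann–Stieltjes sum of it
against `x` splits into sums of indicators `1_{[t_j, t_{j+1})}`. For such an indicator the sum
telescopes to the difference of `x` at the first partition points after `t_{j+1}` and `t_j`,
which converges to `x_{t_{j+1}} - x_{t_j}` by continuity of `x`. Hence the integral is the
discrete sum `∑_k F_k (X_{k+1} - X_k)` with `F_k = V(y_{t_k})` and `X_k = x_{t_k}`.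

That sum is bounded by Young's argument. Splitting `[i, j]` at its midpoint `m` changes the
remainder `∑_{i ≤ k < j} F_k (X_{k+1} - X_k) - F_i (X_j - X_i)` only by the cross term
`(F_m - F_i)(X_j - X_m) = O(|t_j - t_i|^{β+β'})`, and each half has at most `2/3` of the length.
Since `β + β' > 1`, induction on `j - i` bounds the remainder by
`‖F‖_β ‖X‖_{β'} |t_j - t_i|^{β+β'} / (1 - (2/3)^{β+β'-1})`, and `‖F‖_β ≤ ‖∂V‖_∞ ‖y‖_β`.
-/

open Filter Finset Topology

noncomputable def riemannStieltjesSum (f g : ℝ → ℝ) (a b : ℝ) (N : ℕ) : ℝ :=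
  ∑ k ∈ range N,
    f (a + k * (b - a) / N) * (g (a + (k + 1) * (b - a) / N) - g (a + k * (b - a) / N))

theorem RS_eq_of_tendsto {f g : ℝ → ℝ} {a b l : ℝ}
    (h : Tendsto (riemannStieltjesSum f g a b) atTop (𝓝 l)) : RS f g a b = l :=
  h.limUnder_eq

theorem riemannStieltjesSum_congr {f f' : ℝ → ℝ} (g : ℝ → ℝ) {a b : ℝ} (hab : a < b)
    (h : Set.EqOn f f' (Set.Ico a b)) :
    riemannStieltjesSum f g a b = riemannStieltjesSum f' g a b := by
  refine funext fun N => sum_congr rfl fun k hk => ?_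
  have hkN : (k : ℝ) < N := by exact_mod_cast mem_range.1 hk
  have hN : (0 : ℝ) < N := (Nat.cast_nonneg k).trans_lt hkN
  rw [h ⟨?_, ?_⟩]
  · have : 0 ≤ k * (b - a) / N := by have := hab.le; positivity
    linarith
  · have : k * (b - a) / N < b - a := by
      rw [div_lt_iff₀ hN]; nlinarith
    linarith

theorem riemannStieltjesSum_sum {ι : Type*} (s : Finset ι) (c : ι → ℝ) (φ : ι → ℝ → ℝ)
    (g : ℝ → ℝ) (a b : ℝ) :
    riemannStieltjesSum (fun u => ∑ j ∈ s, c j * φ j u) g a b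
      = fun N => ∑ j ∈ s, c j * riemannStieltjesSum (φ j) g a b N := by
  funext N
  simp only [riemannStieltjesSum, sum_mul, mul_sum, mul_assoc]
  exact sum_comm

theorem le_grid_iff_ceil_le {a b c : ℝ} (hab : a < b) {N : ℕ} (hN : 0 < N) (k : ℕ) :
    c ≤ a + k * (b - a) / N ↔ ⌈(c - a) * N / (b - a)⌉₊ ≤ k := by
  have hN' : (0 : ℝ) < N := by exact_mod_cast hN
  rw [Nat.ceil_le, div_le_iff₀ (sub_pos.2 hab), ← sub_le_iff_le_add', le_div_iff₀ hN']

noncomputable def nextGridPoint (a b : ℝ) (N : ℕ) (c : ℝ) : ℝ :=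
  a + ⌈(c - a) * N / (b - a)⌉₊ * (b - a) / N

theorem riemannStieltjesSum_indicator_Ico {a b c d : ℝ} (hab : a < b)
    (hcd : c ≤ d) (hdb : d ≤ b) (g : ℝ → ℝ) {N : ℕ} (hN : 0 < N) :
    riemannStieltjesSum ((Set.Ico c d).indicator 1) g a b N
      = g (nextGridPoint a b N d) - g (nextGridPoint a b N c) := by
  set u : ℕ → ℝ := fun k => a + k * (b - a) / N
  have hdN : ⌈(d - a) * N / (b - a)⌉₊ ≤ N := by
    rw [← le_grid_iff_ceil_le hab hN]
    field_simp
    linarith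
  have hcd' : ⌈(c - a) * N / (b - a)⌉₊ ≤ ⌈(d - a) * N / (b - a)⌉₊ := by
    gcongr
  have hfilter : (range N).filter (fun k => u k ∈ Set.Ico c d)
      = Ico ⌈(c - a) * N / (b - a)⌉₊ ⌈(d - a) * N / (b - a)⌉₊ := by
    ext k
    simp only [mem_filter, mem_range, Set.mem_Ico, mem_Ico, u, le_grid_iff_ceil_le hab hN,
      ← not_le]
    omega
  calc riemannStieltjesSum ((Set.Ico c d).indicator 1) g a b N
      = ∑ k ∈ (range N).filter (fun k => u k ∈ Set.Ico c d), (g (u (k + 1)) - g (u k)) := by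
        rw [sum_filter]
        refine sum_congr rfl fun k _ => ?_
        simp only [Set.indicator_apply, Pi.one_apply, u]
        split_ifs <;> push_cast <;> ring
    _ = _ := by rw [hfilter, sum_Ico_sub (fun k => g (u k)) hcd']; rfl

theorem tendsto_nextGridPoint {a b c : ℝ} (hab : a < b) (hc : c ∈ Set.Icc a b) :
    Tendsto (fun N : ℕ => nextGridPoint a b N c) atTop (𝓝[Set.Icc a b] c) := by
  unfold nextGridPoint
  have hba : 0 < b - a := sub_pos.2 hab
  refine tendsto_nhdsWithin_iff.2 ⟨?_, ?_⟩
  · have hupper : Tendsto (fun N : ℕ => c + (b - a) / N) atTop (𝓝 c) := by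
      simpa using tendsto_const_nhds.add (tendsto_const_div_atTop_nhds_zero_nat (b - a))
    refine tendsto_of_tendsto_of_tendsto_of_le_of_le' tendsto_const_nhds hupper ?_ ?_
    · filter_upwards [eventually_gt_atTop 0] with N hN
      exact (le_grid_iff_ceil_le hab hN _).2 le_rfl
    · filter_upwards [eventually_gt_atTop 0] with N hN
      have hceil := Nat.ceil_lt_add_one (by have := hc.1; positivity : 0 ≤ (c - a) * N / (b - a))
      calc a + ⌈(c - a) * N / (b - a)⌉₊ * (b - a) / N
          ≤ a + ((c - a) * N / (b - a) + 1) * (b - a) / N := by gcongr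
        _ = c + (b - a) / N := by field_simp; ring
  · filter_upwards [eventually_gt_atTop 0] with N hN
    have hle : ⌈(c - a) * N / (b - a)⌉₊ ≤ N := by
      rw [← le_grid_iff_ceil_le hab hN]
      field_simp
      linarith [hc.2]
    refine ⟨le_add_of_nonneg_right (by positivity), ?_⟩
    calc a + ⌈(c - a) * N / (b - a)⌉₊ * (b - a) / N ≤ a + N * (b - a) / N := by gcongr
      _ = b := by field_simp; ring

theorem tendsto_riemannStieltjesSum_indicator_Ico {a b c d : ℝ} (hab : a < b) (hac : a ≤ c)
    (hcd : c ≤ d) (hdb : d ≤ b) {g : ℝ → ℝ} (hgc : ContinuousWithinAt g (Set.Icc a b) c)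
    (hgd : ContinuousWithinAt g (Set.Icc a b) d) :
    Tendsto (riemannStieltjesSum ((Set.Ico c d).indicator 1) g a b) atTop (𝓝 (g d - g c)) := by
  refine Tendsto.congr' ?_ ((hgd.tendsto.comp (tendsto_nextGridPoint hab ⟨hac.trans hcd, hdb⟩)).sub
    (hgc.tendsto.comp (tendsto_nextGridPoint hab ⟨hac, hcd.trans hdb⟩)))
  filter_upwards [eventually_gt_atTop 0] with N hN
  exact (riemannStieltjesSum_indicator_Ico hab hcd hdb g hN).symm

theorem eqOn_sum_indicator_Ico {p : ℕ → ℝ} (hp : Monotone p) {a b : ℕ} {f : ℝ → ℝ} {c : ℕ → ℝ}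
    (hf : ∀ j ∈ Ico a b, Set.EqOn f (fun _ => c j) (Set.Ico (p j) (p (j + 1)))) :
    Set.EqOn f (fun u => ∑ j ∈ Ico a b, c j * (Set.Ico (p j) (p (j + 1))).indicator 1 u)
      (Set.Ico (p a) (p b)) := by
  intro u hu
  have hab : a ≤ b := (hp.reflect_lt (hu.1.trans_lt hu.2)).le
  obtain ⟨i, hi, hui⟩ : ∃ i ∈ Ico a b, u ∈ Set.Ico (p i) (p (i + 1)) := by
    have := _root_.Ico_subset_biUnion_Ico (b - a) (fun k => p (a + k))
      (by simpa [Nat.add_sub_cancel' hab] using hu)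
    simp only [Set.mem_iUnion, mem_range] at this
    obtain ⟨k, hk, huk⟩ := this
    exact ⟨a + k, mem_Ico.2 ⟨by omega, by omega⟩, huk⟩
  change f u = ∑ j ∈ Ico a b, _
  rw [sum_eq_single_of_mem i hi fun j _ hji => ?_, Set.indicator_of_mem hui, Pi.one_apply, mul_one,
    hf i hi hui]
  have hdisj := hp.pairwise_disjoint_on_Ico_succ hji
  simp only [Order.succ_eq_add_one, Function.onFun] at hdisj
  rw [Set.indicator_of_notMem (Set.disjoint_right.1 hdisj hui), mul_zero]

theorem RS_eq_sum_of_eqOn_Ico {p : ℕ → ℝ} (hp : Monotone p) {a b : ℕ} (hab : p a < p b)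
    {f g : ℝ → ℝ} {c : ℕ → ℝ}
    (hf : ∀ j ∈ Ico a b, Set.EqOn f (fun _ => c j) (Set.Ico (p j) (p (j + 1))))
    (hg : ContinuousOn g (Set.Icc (p a) (p b))) :
    RS f g (p a) (p b) = ∑ j ∈ Ico a b, c j * (g (p (j + 1)) - g (p j)) := by
  refine RS_eq_of_tendsto ?_
  rw [riemannStieltjesSum_congr g hab (eqOn_sum_indicator_Ico hp hf), riemannStieltjesSum_sum]
  refine tendsto_finsetSum _ fun j hj => Tendsto.const_mul (c j) ?_
  obtain ⟨haj, hjb⟩ := mem_Ico.1 hj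
  have hpj : p j ∈ Set.Icc (p a) (p b) := ⟨hp haj, hp hjb.le⟩
  have hpj' : p (j + 1) ∈ Set.Icc (p a) (p b) := ⟨hp (by omega), hp hjb⟩
  exact tendsto_riemannStieltjesSum_indicator_Ico hab hpj.1 (hp (Nat.le_succ j)) hpj'.2
    (hg _ hpj) (hg _ hpj')

theorem etaFn_eqOn {T : ℝ} (hT : 0 < T) {n : ℕ} (hn : 0 < n) (j : ℕ) :
    Set.EqOn (etaFn T n) (fun _ => (j : ℝ) * T / n)
      (Set.Ico ((j : ℝ) * T / n) (((j + 1 : ℕ) : ℝ) * T / n)) := by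
  intro u ⟨hju, huj⟩
  have hn' : (0 : ℝ) < n := by exact_mod_cast hn
  have hu : (j : ℝ) ≤ u * n / T := by rw [le_div_iff₀ hT, ← div_le_iff₀ hn']; exact hju
  have hu' : u * n / T < j + 1 := by
    rw [div_lt_iff₀ hT, ← lt_div_iff₀ hn']; exact_mod_cast huj
  simp only [etaFn, Nat.floor_eq_iff ((Nat.cast_nonneg j).trans hu) |>.2 ⟨hu, hu'⟩]

theorem continuousOn_of_abs_sub_le_mul_rpow {f : ℝ → ℝ} {s : Set ℝ} {C γ : ℝ} (hγ : 0 < γ)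
    (hf : ∀ u ∈ s, ∀ v ∈ s, |f v - f u| ≤ C * |v - u| ^ γ) : ContinuousOn f s := by
  intro c hc
  have hbound : Tendsto (fun v => C * |v - c| ^ γ) (𝓝[s] c) (𝓝 0) := by
    have : ContinuousAt (fun v => C * |v - c| ^ γ) c := by fun_prop (disch := positivity)
    simpa [Real.zero_rpow hγ.ne'] using this.tendsto.mono_left nhdsWithin_le_nhds
  refine tendsto_sub_nhds_zero_iff.1 (squeeze_zero_norm' ?_ hbound)
  filter_upwards [self_mem_nhdsWithin] with v hv
  exact hf c hc v hv

theorem rpow_add_rpow_le_of_le_mul {a b l θ : ℝ} (ha : 0 ≤ a) (hb : 0 ≤ b) (hl : 0 ≤ l)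
    (hal : a ≤ l * (a + b)) (hbl : b ≤ l * (a + b)) (hθ : 1 ≤ θ) :
    a ^ θ + b ^ θ ≤ l ^ (θ - 1) * (a + b) ^ θ := by
  have hθ' : 1 + (θ - 1) ≠ 0 := by linarith
  have hpow : ∀ z, 0 ≤ z → z ≤ l * (a + b) → z ^ θ ≤ z * (l * (a + b)) ^ (θ - 1) := by
    intro z hz hzl
    calc z ^ θ = z * z ^ (θ - 1) := by rw [← Real.rpow_one_add' hz hθ', add_sub_cancel]
      _ ≤ z * (l * (a + b)) ^ (θ - 1) := by gcongr
  calc a ^ θ + b ^ θ ≤ a * (l * (a + b)) ^ (θ - 1) + b * (l * (a + b)) ^ (θ - 1) :=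
        add_le_add (hpow a ha hal) (hpow b hb hbl)
    _ = l ^ (θ - 1) * ((a + b) * (a + b) ^ (θ - 1)) := by
        rw [Real.mul_rpow hl (add_nonneg ha hb)]; ring
    _ = l ^ (θ - 1) * (a + b) ^ θ := by
        rw [← Real.rpow_one_add' (add_nonneg ha hb) hθ', add_sub_cancel]

def youngRemainder (F X : ℕ → ℝ) (i j : ℕ) : ℝ :=
  ∑ k ∈ Ico i j, F k * (X (k + 1) - X k) - F i * (X j - X i)

theorem youngRemainder_self (F X : ℕ → ℝ) (i : ℕ) : youngRemainder F X i i = 0 := by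
  simp [youngRemainder]

theorem youngRemainder_succ (F X : ℕ → ℝ) (i : ℕ) : youngRemainder F X i (i + 1) = 0 := by
  simp [youngRemainder]

theorem youngRemainder_eq_add {F X : ℕ → ℝ} {i m j : ℕ} (him : i ≤ m) (hmj : m ≤ j) :
    youngRemainder F X i j
      = youngRemainder F X i m + youngRemainder F X m j + (F m - F i) * (X j - X m) := by
  simp only [youngRemainder, ← sum_Ico_consecutive _ him hmj]
  ring

theorem abs_youngRemainder_le_of_split {β β' LF LX A B : ℝ} (hβ : 0 ≤ β) (hβ' : 0 ≤ β')
    (hθ : 1 < β + β') (hLF : 0 ≤ LF) (hLX : 0 ≤ LX) (hA : 0 ≤ A) (hB : 0 ≤ B)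
    (hA' : A ≤ 2 / 3 * (A + B)) (hB' : B ≤ 2 / 3 * (A + B)) {F X : ℕ → ℝ} {i m j : ℕ}
    (him : i ≤ m) (hmj : m ≤ j)
    (hleft : |youngRemainder F X i m| ≤ LF * LX / (1 - (2 / 3) ^ (β + β' - 1)) * A ^ (β + β'))
    (hright : |youngRemainder F X m j| ≤ LF * LX / (1 - (2 / 3) ^ (β + β' - 1)) * B ^ (β + β'))
    (hF : |F m - F i| ≤ LF * A ^ β) (hX : |X j - X m| ≤ LX * B ^ β') :
    |youngRemainder F X i j| ≤ LF * LX / (1 - (2 / 3) ^ (β + β' - 1)) * (A + B) ^ (β + β') := by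
  set q : ℝ := (2 / 3) ^ (β + β' - 1)
  have hq : q < 1 := Real.rpow_lt_one (by norm_num) (by norm_num) (by linarith)
  set C := LF * LX / (1 - q)
  have hC : 0 ≤ C := div_nonneg (mul_nonneg hLF hLX) (by linarith)
  have hCq : C * q + LF * LX = C := by
    have : C * (1 - q) = LF * LX := div_mul_cancel₀ _ (by linarith)
    linear_combination -this
  have hcross : |(F m - F i) * (X j - X m)| ≤ LF * LX * (A + B) ^ (β + β') :=
    calc |(F m - F i) * (X j - X m)| = |F m - F i| * |X j - X m| := abs_mul _ _
      _ ≤ (LF * A ^ β) * (LX * B ^ β') := mul_le_mul hF hX (abs_nonneg _) (by positivity)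
      _ ≤ (LF * (A + B) ^ β) * (LX * (A + B) ^ β') := by gcongr <;> linarith
      _ = LF * LX * (A + B) ^ (β + β') := by
          rw [Real.rpow_add' (by positivity) (by linarith)]; ring
  have hsplit := rpow_add_rpow_le_of_le_mul (θ := β + β') hA hB (by norm_num) hA' hB' (by linarith)
  rw [youngRemainder_eq_add him hmj]
  calc _ ≤ |youngRemainder F X i m| + |youngRemainder F X m j| + |(F m - F i) * (X j - X m)| :=
        abs_add_three _ _ _
    _ ≤ C * A ^ (β + β') + C * B ^ (β + β') + LF * LX * (A + B) ^ (β + β') :=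
        add_le_add (add_le_add hleft hright) hcross
    _ ≤ C * (q * (A + B) ^ (β + β')) + LF * LX * (A + B) ^ (β + β') := by
        rw [← mul_add]; exact add_le_add (mul_le_mul_of_nonneg_left hsplit hC) le_rfl
    _ = C * (A + B) ^ (β + β') := by linear_combination (A + B) ^ (β + β') * hCq

theorem abs_youngRemainder_le {β β' h LF LX : ℝ} (hβ : 0 ≤ β) (hβ' : 0 ≤ β')
    (hθ : 1 < β + β') (hh : 0 ≤ h) (hLF : 0 ≤ LF) (hLX : 0 ≤ LX) {F X : ℕ → ℝ} {a b : ℕ}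
    (hF : ∀ i j, a ≤ i → i ≤ j → j ≤ b → |F j - F i| ≤ LF * (((j : ℝ) - i) * h) ^ β)
    (hX : ∀ i j, a ≤ i → i ≤ j → j ≤ b → |X j - X i| ≤ LX * (((j : ℝ) - i) * h) ^ β')
    {i j : ℕ} (hai : a ≤ i) (hij : i ≤ j) (hjb : j ≤ b) :
    |youngRemainder F X i j|
      ≤ LF * LX / (1 - (2 / 3) ^ (β + β' - 1)) * (((j : ℝ) - i) * h) ^ (β + β') := by
  induction hd : j - i using Nat.strong_induction_on generalizing i j with
  | _ d ih =>
  rcases Nat.lt_or_ge d 2 with hd2 | hd2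
  · have hC : 0 ≤ LF * LX / (1 - (2 / 3 : ℝ) ^ (β + β' - 1)) := div_nonneg (mul_nonneg hLF hLX)
      (sub_nonneg.2 (Real.rpow_le_one (by norm_num) (by norm_num) (by linarith)))
    obtain rfl | rfl : j = i ∨ j = i + 1 := by omega
    all_goals simp only [youngRemainder_self, youngRemainder_succ, abs_zero]
    all_goals
      exact mul_nonneg hC (Real.rpow_nonneg (mul_nonneg (sub_nonneg.2 (Nat.cast_le.2 hij)) hh) _)
  set m := i + d / 2
  have hm : (3 * m : ℝ) ≤ 2 * j + i ∧ (j + 2 * i : ℝ) ≤ 3 * m := by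
    constructor <;> norm_cast <;> omega
  have hAB : ((j : ℝ) - i) * h = ((m : ℝ) - i) * h + ((j : ℝ) - m) * h := by ring
  rw [hAB]
  refine abs_youngRemainder_le_of_split hβ hβ' hθ hLF hLX
    (mul_nonneg (sub_nonneg.2 (by simp [m])) hh)
    (mul_nonneg (sub_nonneg.2 (by norm_cast; omega)) hh)
    (by rw [← hAB]; nlinarith) (by rw [← hAB]; nlinarith) (by omega) (by omega)
    (ih (m - i) (by omega) hai (by omega) (by omega) rfl)
    (ih (j - m) (by omega) (by omega) (by omega) hjb rfl)
    (hF i m hai (by omega) (by omega)) (hX m j (by omega) (by omega) hjb)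

theorem abs_sum_le_of_holder {β β' h LF LX : ℝ} (hβ : 0 ≤ β) (hβ' : 0 ≤ β')
    (hθ : 1 < β + β') (hh : 0 ≤ h) (hLF : 0 ≤ LF) (hLX : 0 ≤ LX) {F X : ℕ → ℝ} {a b : ℕ}
    (hF : ∀ i j, a ≤ i → i ≤ j → j ≤ b → |F j - F i| ≤ LF * (((j : ℝ) - i) * h) ^ β)
    (hX : ∀ i j, a ≤ i → i ≤ j → j ≤ b → |X j - X i| ≤ LX * (((j : ℝ) - i) * h) ^ β')
    (hab : a ≤ b) :
    |∑ k ∈ Ico a b, F k * (X (k + 1) - X k)|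
      ≤ (|F a| + LF / (1 - (2 / 3) ^ (β + β' - 1)) * (((b : ℝ) - a) * h) ^ β)
        * (LX * (((b : ℝ) - a) * h) ^ β') := by
  have hH : 0 ≤ ((b : ℝ) - a) * h := mul_nonneg (sub_nonneg.2 (Nat.cast_le.2 hab)) hh
  have hrem := abs_youngRemainder_le hβ hβ' hθ hh hLF hLX hF hX le_rfl hab le_rfl
  rw [Real.rpow_add' hH (by linarith)] at hrem
  calc |∑ k ∈ Ico a b, F k * (X (k + 1) - X k)|
      = |F a * (X b - X a) + youngRemainder F X a b| := by rw [youngRemainder]; ring_nf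
    _ ≤ |F a| * |X b - X a| + |youngRemainder F X a b| := by
        rw [← abs_mul]; exact abs_add_le _ _
    _ ≤ |F a| * (LX * (((b : ℝ) - a) * h) ^ β') + LF * LX / (1 - (2 / 3) ^ (β + β' - 1)) *
          ((((b : ℝ) - a) * h) ^ β * (((b : ℝ) - a) * h) ^ β') := by
        gcongr
        exact hX a b le_rfl hab le_rfl
    _ = _ := by ring

theorem monotone_grid {T : ℝ} (hT : 0 ≤ T) (n : ℕ) : Monotone fun j : ℕ => (j : ℝ) * T / n :=
  fun _ _ hij => div_le_div_of_nonneg_right (mul_le_mul_of_nonneg_right (Nat.cast_le.2 hij) hT)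
    (Nat.cast_nonneg n)

theorem abs_grid_sub {T : ℝ} (hT : 0 ≤ T) (n : ℕ) {i j : ℕ} (hij : i ≤ j) :
    |(j : ℝ) * T / n - (i : ℝ) * T / n| = ((j : ℝ) - i) * (T / n) := by
  rw [abs_of_nonneg (sub_nonneg.2 (monotone_grid hT n hij))]; ring

theorem grid_mem_Icc {T : ℝ} (hT : 0 ≤ T) {n j : ℕ} (hj : j ≤ n) :
    (j : ℝ) * T / n ∈ Set.Icc 0 T :=
  ⟨by positivity, div_le_of_le_mul₀ (Nat.cast_nonneg n) hT
    (by rw [mul_comm T]; exact mul_le_mul_of_nonneg_right (Nat.cast_le.2 hj) hT)⟩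

theorem RS_etaFn_eq_sum {T : ℝ} (hT : 0 < T) {n : ℕ} (hn : 0 < n) {ka kb : ℕ}
    (hab : (ka : ℝ) * T / n < (kb : ℝ) * T / n) (φ : ℝ → ℝ) {g : ℝ → ℝ}
    (hg : ContinuousOn g (Set.Icc ((ka : ℝ) * T / n) ((kb : ℝ) * T / n))) :
    RS (fun u => φ (etaFn T n u)) g ((ka : ℝ) * T / n) ((kb : ℝ) * T / n)
      = ∑ j ∈ Ico ka kb,
          φ ((j : ℝ) * T / n) * (g (((j + 1 : ℕ) : ℝ) * T / n) - g ((j : ℝ) * T / n)) :=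
  RS_eq_sum_of_eqOn_Ico (monotone_grid hT.le n) hab
    (fun j _ u hu => by simp only [etaFn_eqOn hT hn j hu]) hg

theorem abs_RS_etaFn_le {E : Type*} [SeminormedAddCommGroup E] {β β' : ℝ} (hβ : 0 ≤ β)
    (hβ' : 0 < β') (hθ : 1 < β + β') {V : E → ℝ} {MV L K : ℝ} (hVb : ∀ z, |V z| ≤ MV)
    (hL : 0 ≤ L) (hVL : ∀ z w, |V z - V w| ≤ L * ‖z - w‖) (hMV : MV ≤ K)
    (hLK : L / (1 - (2 / 3) ^ (β + β' - 1)) ≤ K) {T : ℝ} {n : ℕ} {x : ℝ → ℝ} {Cx : ℝ}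
    {y : ℝ → E} {Cy : ℝ} {ka kb : ℕ} (hT : 0 < T) (hn : 0 < n)
    (hx : ∀ u ∈ Set.Icc (0 : ℝ) T, ∀ v ∈ Set.Icc (0 : ℝ) T, |x v - x u| ≤ Cx * |v - u| ^ β')
    (hy : ∀ k k' : ℕ, k ≤ n → k' ≤ n →
      (ka : ℝ) * T / n ≤ (k : ℝ) * T / n → (k : ℝ) * T / n ≤ (kb : ℝ) * T / n →
      (ka : ℝ) * T / n ≤ (k' : ℝ) * T / n → (k' : ℝ) * T / n ≤ (kb : ℝ) * T / n →
      ‖y ((k : ℝ) * T / n) - y ((k' : ℝ) * T / n)‖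
        ≤ Cy * |(k : ℝ) * T / n - (k' : ℝ) * T / n| ^ β)
    (hka : ka ≤ n) (hkb : kb ≤ n) (hab : (ka : ℝ) * T / n < (kb : ℝ) * T / n) :
    |RS (fun u => V (y (etaFn T n u))) x ((ka : ℝ) * T / n) ((kb : ℝ) * T / n)|
      ≤ K * (1 + Cy * ((kb : ℝ) * T / n - (ka : ℝ) * T / n) ^ β) * Cx
        * ((kb : ℝ) * T / n - (ka : ℝ) * T / n) ^ β' := by
  have hp := monotone_grid hT.le n
  have hkab : ka ≤ kb := (hp.reflect_lt hab).le
  have hX : ∀ i j, ka ≤ i → i ≤ j → j ≤ kb →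
      |x ((j : ℝ) * T / n) - x ((i : ℝ) * T / n)| ≤ Cx * (((j : ℝ) - i) * (T / n)) ^ β' :=
    fun i j _ hij hj => abs_grid_sub hT.le n hij ▸
      hx _ (grid_mem_Icc hT.le (by omega)) _ (grid_mem_Icc hT.le (by omega))
  have hF : ∀ i j, ka ≤ i → i ≤ j → j ≤ kb → |V (y ((j : ℝ) * T / n)) - V (y ((i : ℝ) * T / n))|
      ≤ L * Cy * (((j : ℝ) - i) * (T / n)) ^ β := fun i j hi hij hj => by
    rw [mul_assoc, ← abs_grid_sub hT.le n hij]
    exact (hVL _ _).trans (mul_le_mul_of_nonneg_left (hy j i (by omega) (by omega)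
      (hp (hi.trans hij)) (hp hj) (hp hi) (hp (hij.trans hj))) hL)
  set δ := (kb : ℝ) * T / n - (ka : ℝ) * T / n
  have hδ : 0 < δ := sub_pos.2 hab
  have hts : ((kb : ℝ) - ka) * (T / n) = δ := by ring
  have hCx : 0 ≤ Cx := nonneg_of_mul_nonneg_left
    ((abs_nonneg _).trans (hts ▸ hX ka kb le_rfl hkab le_rfl)) (Real.rpow_pos_of_pos hδ _)
  have hCy : 0 ≤ Cy := by
    have := hy kb ka hkb hka hab.le le_rfl le_rfl hab.le
    rw [abs_of_pos hδ] at this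
    exact nonneg_of_mul_nonneg_left ((norm_nonneg _).trans this) (Real.rpow_pos_of_pos hδ _)
  have hxc := (continuousOn_of_abs_sub_le_mul_rpow hβ' hx).mono
    (Set.Icc_subset_Icc (grid_mem_Icc hT.le hka).1 (grid_mem_Icc hT.le hkb).2)
  rw [RS_etaFn_eq_sum hT hn hab (fun z => V (y z)) hxc]
  refine (abs_sum_le_of_holder hβ hβ'.le hθ (by positivity) (mul_nonneg hL hCy) hCx hF hX
    hkab).trans ?_
  rw [hts]
  have hP : 0 ≤ Cy * δ ^ β := by positivity
  calc _ ≤ (K + K * (Cy * δ ^ β)) * (Cx * δ ^ β') := by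
        gcongr ?_ * _
        rw [mul_div_right_comm L Cy, mul_assoc]
        exact add_le_add ((hVb _).trans hMV) (mul_le_mul_of_nonneg_right hLK hP)
    _ = _ := by ring

theorem step_function_young_integral_estimate_general
    (β β' : ℝ) (hβ0 : 0 < β) (hβ'0 : 0 < β')
    (hββ' : 1 < β + β')
    (m : ℕ) (V : (Fin m → ℝ) → ℝ) (MV M'V : ℝ)
    (hV : ContDiff ℝ 1 V) (hVb : ∀ z, |V z| ≤ MV)
    (hV' : ∀ z, ‖fderiv ℝ V z‖ ≤ M'V) :
    ∃ K : ℝ, 0 < K ∧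
      ∀ (T : ℝ) (n : ℕ) (x : ℝ → ℝ) (Cx : ℝ) (y : ℝ → Fin m → ℝ) (Cy : ℝ) (s t : ℝ),
      0 < T → 0 < n →
      (∀ u ∈ Set.Icc (0 : ℝ) T, ∀ v ∈ Set.Icc (0 : ℝ) T, |x v - x u| ≤ Cx * |v - u| ^ β') →
      -- discrete Hölder seminorm bound for `y` on `D ∩ [s,t]`
      (∀ k k' : ℕ, k ≤ n → k' ≤ n →
        s ≤ (k : ℝ) * T / n → (k : ℝ) * T / n ≤ t →
        s ≤ (k' : ℝ) * T / n → (k' : ℝ) * T / n ≤ t →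
        ‖y ((k : ℝ) * T / n) - y ((k' : ℝ) * T / n)‖
          ≤ Cy * |(k : ℝ) * T / n - (k' : ℝ) * T / n| ^ β) →
      (∃ k : ℕ, k ≤ n ∧ s = (k : ℝ) * T / n) →
      (∃ k : ℕ, k ≤ n ∧ t = (k : ℝ) * T / n) →
      s < t →
      |RS (fun u => V (y (etaFn T n u))) x s t|
        ≤ K * (1 + Cy * (t - s) ^ β) * Cx * (t - s) ^ β' := by
  have hq : 0 ≤ 1 - (2 / 3 : ℝ) ^ (β + β' - 1) :=
    sub_nonneg.2 (Real.rpow_le_one (by norm_num) (by norm_num) (by linarith))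
  have hMV : 0 ≤ MV := (abs_nonneg _).trans (hVb 0)
  have hM'V : 0 ≤ M'V := (norm_nonneg _).trans (hV' 0)
  have hLK := div_nonneg hM'V hq
  have hVL : ∀ z w, |V z - V w| ≤ M'V * ‖z - w‖ := fun z w => by
    simpa only [Real.norm_eq_abs] using convex_univ.norm_image_sub_le_of_norm_fderiv_le
      (fun u _ => (hV.differentiable one_ne_zero).differentiableAt) (fun u _ => hV' u)
      (Set.mem_univ w) (Set.mem_univ z)
  refine ⟨MV + M'V / (1 - (2 / 3) ^ (β + β' - 1)) + 1, by linarith, ?_⟩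
  rintro T n x Cx y Cy s t hT hn hx hy ⟨ka, hka, rfl⟩ ⟨kb, hkb, rfl⟩ hst
  exact abs_RS_etaFn_le hβ0.le hβ'0 hββ' hVb hM'V hVL (by linarith) (by linarith) hT hn hx hy
    hka hkb hst

/-- Lemma A.3: for `β + β' > 1`, a `β'`-Hölder driver `x`, `V ∈ C¹_b`, and a path `y`
with finite discrete `β`-Hölder seminorm over the uniform partition `D = {kT/n}`, one has,
for `s < t` in `D`,
`|∫_s^t V(y_{η(r)}) dx_r| ≤ K [1 + ‖y‖_{s,t,β,n}(t−s)^β] ‖x‖_{β'} (t−s)^{β'}`,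
with `K` depending only on `β, β', ‖V‖_∞, ‖∂V‖_∞`. -/
theorem step_function_young_integral_estimate
    (β β' : ℝ) (hβ0 : 0 < β) (hβ1 : β < 1) (hβ'0 : 0 < β') (hβ'1 : β' < 1)
    (hββ' : 1 < β + β')
    (m : ℕ) (V : (Fin m → ℝ) → ℝ) (MV M'V : ℝ)
    (hV : ContDiff ℝ 1 V) (hVb : ∀ z, |V z| ≤ MV)
    (hV' : ∀ z, ‖fderiv ℝ V z‖ ≤ M'V) :
    ∃ K : ℝ, 0 < K ∧
      ∀ (T : ℝ) (n : ℕ) (x : ℝ → ℝ) (Cx : ℝ) (y : ℝ → Fin m → ℝ) (Cy : ℝ) (s t : ℝ),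
      0 < T → 0 < n →
      (∀ u ∈ Set.Icc (0 : ℝ) T, ∀ v ∈ Set.Icc (0 : ℝ) T, |x v - x u| ≤ Cx * |v - u| ^ β') →
      -- discrete Hölder seminorm bound for `y` on `D ∩ [s,t]`
      (∀ k k' : ℕ, k ≤ n → k' ≤ n →
        s ≤ (k : ℝ) * T / n → (k : ℝ) * T / n ≤ t →
        s ≤ (k' : ℝ) * T / n → (k' : ℝ) * T / n ≤ t →
        ‖y ((k : ℝ) * T / n) - y ((k' : ℝ) * T / n)‖
          ≤ Cy * |(k : ℝ) * T / n - (k' : ℝ) * T / n| ^ β) →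
      (∃ k : ℕ, k ≤ n ∧ s = (k : ℝ) * T / n) →
      (∃ k : ℕ, k ≤ n ∧ t = (k : ℝ) * T / n) →
      s < t →
      |RS (fun u => V (y (etaFn T n u))) x s t|
        ≤ K * (1 + Cy * (t - s) ^ β) * Cx * (t - s) ^ β' :=
  step_function_young_integral_estimate_general β β' hβ0 hβ'0 hββ' m V MV M'V hV hVb hV'
end
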